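/- Fix n ∈ ℕ, ε > 0 and K ≥ 2^n·ε, and let (P, v) be the packing game of the instability construction with weights w. Then the allocation y : P → ℝ defined by y(r) = 1 and y(p_i^{(l)}) = y(q_i^{(l)}) = l·K for all l ∈ {1,…,n+2}, i ∈ {1,…,4}, lies in the core of (P, v): y(P) = v(P) and y(S) ≥ v(S) for all S ⊆ P. -/

import Mathlib

/-- The players of the instability construction: a root `r`, and players `p i (l)`,
`q i (l)` for levels `l ∈ {1, …, n+2}` (encoded by `Fin (n+2)`, level `= l.1 + 1`) and
`i ∈ {1, …, 4}`. -/
inductive Player (n : ℕ) : Type where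
  | r : Player n
  | p : Fin (n + 2) → Fin 4 → Player n
  | q : Fin (n + 2) → Fin 4 → Player n
  deriving DecidableEq, Fintype

/-- Index set for the family `𝒮` of the instability construction. -/
inductive Idx (n : ℕ) : Type where
  | root : Idx n
  | rootP : Fin 4 → Idx n
  | pair : Fin (n + 2) → Fin 4 → Idx n
  | quad : Fin (n + 1) → Fin 4 → Idx n
  deriving DecidableEq, Fintype

/-- The coalitions of the family `𝒮`: `{r}`; `{r, p_i^{(1)}}`; `{p_i^{(l)}, q_i^{(l)}}`;
and `{q_1^{(l)}, q_2^{(l)}, q_3^{(l)}, q_4^{(l)}, p_i^{(l+1)}}`. -/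
def coal {n : ℕ} : Idx n → Finset (Player n)
  | .root => {Player.r}
  | .rootP i => {Player.r, Player.p 0 i}
  | .pair l i => {Player.p l i, Player.q l i}
  | .quad l i => {Player.q l.castSucc 0, Player.q l.castSucc 1, Player.q l.castSucc 2,
      Player.q l.castSucc 3, Player.p l.succ i}

/-- The weights of the family `𝒮`: `rootW` on `{r}` (which is `1` for `w` and `1 − ε` for
`w̃`); `1` on `{r, p_i^{(1)}}`; `2·l·K` on `{p_i^{(l)}, q_i^{(l)}}`; and `4·l·K` on
`{q_1^{(l)}, …, q_4^{(l)}, p_i^{(l+1)}}`. -/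
noncomputable def wt {n : ℕ} (K rootW : ℝ) : Idx n → ℝ
  | .root => rootW
  | .rootP _ => 1
  | .pair l _ => 2 * ((l.1 : ℝ) + 1) * K
  | .quad l _ => 4 * ((l.1 : ℝ) + 1) * K

/-- The packing game of the instability construction: `packV n K rootW S` is the maximum
total weight of a packing of pairwise disjoint members of `𝒮` inside `S` (the empty
packing is allowed). -/
noncomputable def packV (n : ℕ) (K rootW : ℝ) (S : Finset (Player n)) : ℝ :=
  ((Finset.univ : Finset (Idx n)).powerset.filter (fun F =>
      (∀ j ∈ F, coal j ⊆ S) ∧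
      ∀ j ∈ F, ∀ j' ∈ F, j ≠ j' → Disjoint (coal j) (coal j'))).sup'
    ⟨∅, by simp⟩ (fun F => ∑ j ∈ F, wt K rootW j)


/-! The coalitions `{r}` and `{p_i^{(l)}, q_i^{(l)}}` partition `P`, and `y` pays each of them
exactly its weight, so `y(P)` is the weight of a packing and `y(P) ≤ v(P)`. Conversely `y ≥ 0`
and `y` pays every coalition of `𝒮` at least its weight (a coalition `{q^{(l)}, p_i^{(l+1)}}`
receives `4lK + (l+1)K`), so by disjointness every packing inside `S` weighs at most `y(S)`. -/

theorem Finset.sum_le_sum_of_pairwiseDisjoint {ι α M : Type*} [DecidableEq α]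
    [AddCommMonoid M] [PartialOrder M] [IsOrderedAddMonoid M]
    {c : ι → Finset α} {w : ι → M} {y : α → M} {F : Finset ι} {S : Finset α}
    (hdisj : (F : Set ι).PairwiseDisjoint c) (hsub : ∀ j ∈ F, c j ⊆ S)
    (hy : ∀ a ∈ S, 0 ≤ y a) (hw : ∀ j ∈ F, w j ≤ ∑ a ∈ c j, y a) :
    ∑ j ∈ F, w j ≤ ∑ a ∈ S, y a :=
  calc ∑ j ∈ F, w j ≤ ∑ j ∈ F, ∑ a ∈ c j, y a := Finset.sum_le_sum hw
    _ = ∑ a ∈ F.biUnion c, y a := (Finset.sum_biUnion hdisj).symm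
    _ ≤ ∑ a ∈ S, y a :=
      Finset.sum_le_sum_of_subset_of_nonneg (Finset.biUnion_subset.2 hsub) fun a ha _ => hy a ha

section PackingGame

variable {n : ℕ} {K rootW : ℝ}

theorem le_packV {S : Finset (Player n)} {F : Finset (Idx n)}
    (hsub : ∀ j ∈ F, coal j ⊆ S) (hdisj : (F : Set (Idx n)).PairwiseDisjoint coal) :
    ∑ j ∈ F, wt K rootW j ≤ packV n K rootW S :=
  Finset.le_sup' (fun F => ∑ j ∈ F, wt K rootW j) (by simpa using ⟨hsub, hdisj⟩)

theorem packV_le_sum {y : Player n → ℝ} (hy : ∀ p, 0 ≤ y p)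
    (hw : ∀ j, wt K rootW j ≤ ∑ p ∈ coal j, y p) (S : Finset (Player n)) :
    packV n K rootW S ≤ ∑ p ∈ S, y p :=
  Finset.sup'_le _ _ fun F hF => by
    simp only [Finset.mem_filter] at hF
    exact Finset.sum_le_sum_of_pairwiseDisjoint hF.2.2 hF.2.1 (fun p _ => hy p) fun j _ => hw j

end PackingGame

section LevelAllocation

variable {n : ℕ} {K : ℝ}

def levelAlloc (n : ℕ) (K : ℝ) : Player n → ℝ
  | Player.r => 1
  | Player.p l _ | Player.q l _ => ((l.1 : ℝ) + 1) * K

theorem levelAlloc_nonneg (hK : 0 ≤ K) (p : Player n) : 0 ≤ levelAlloc n K p := by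
  cases p <;> simp only [levelAlloc] <;> positivity

theorem wt_le_sum_levelAlloc (hK : 0 ≤ K) (j : Idx n) :
    wt K 1 j ≤ ∑ p ∈ coal j, levelAlloc n K p := by
  cases j <;> simp [coal, wt, levelAlloc] <;> nlinarith

def Idx.isBasic : Idx n → Bool
  | .root | .pair _ _ => true
  | .rootP _ | .quad _ _ => false

def basicPacking (n : ℕ) : Finset (Idx n) :=
  Finset.univ.filter fun j => j.isBasic

@[simp]
theorem mem_basicPacking {j : Idx n} : j ∈ basicPacking n ↔ j.isBasic := by
  simp [basicPacking]

theorem pairwiseDisjoint_basicPacking : (basicPacking n : Set (Idx n)).PairwiseDisjoint coal := by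
  intro a ha b hb hab
  rw [Finset.mem_coe, mem_basicPacking] at ha hb
  cases a <;> cases b <;> simp_all [Idx.isBasic, coal, Finset.disjoint_left]

theorem biUnion_basicPacking : (basicPacking n).biUnion coal = Finset.univ := by
  refine Finset.eq_univ_of_forall fun p => Finset.mem_biUnion.2 ?_
  cases p with
  | r => exact ⟨.root, by simp [Idx.isBasic], by simp [coal]⟩
  | p l i | q l i => exact ⟨.pair l i, by simp [Idx.isBasic], by simp [coal]⟩

theorem sum_levelAlloc_coal_of_mem_basicPacking {j : Idx n} (hj : j ∈ basicPacking n) :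
    ∑ p ∈ coal j, levelAlloc n K p = wt K 1 j := by
  cases j with
  | root => simp [coal, wt, levelAlloc]
  | pair l i => simp [coal, wt, levelAlloc]; ring
  | rootP _ | quad _ _ => simp [Idx.isBasic] at hj

theorem sum_levelAlloc_eq_packV (hK : 0 ≤ K) :
    ∑ p, levelAlloc n K p = packV n K 1 Finset.univ := by
  refine le_antisymm ?_ (packV_le_sum (levelAlloc_nonneg hK) (wt_le_sum_levelAlloc hK) _)
  calc ∑ p, levelAlloc n K p = ∑ j ∈ basicPacking n, ∑ p ∈ coal j, levelAlloc n K p := by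
        rw [← Finset.sum_biUnion pairwiseDisjoint_basicPacking, biUnion_basicPacking]
    _ = ∑ j ∈ basicPacking n, wt K 1 j :=
        Finset.sum_congr rfl fun _ hj => sum_levelAlloc_coal_of_mem_basicPacking hj
    _ ≤ packV n K 1 Finset.univ :=
        le_packV (fun _ _ => Finset.subset_univ _) pairwiseDisjoint_basicPacking

end LevelAllocation

/-- The allocation `y` with `y(r) = 1` and
`y(p_i^{(l)}) = y(q_i^{(l)}) = l·K` lies in the core of the packing game `(P, v)` of the
instability construction (with `ε > 0` and `K ≥ 2^n·ε`). -/
theorem stmt13 (n : ℕ) (ε K : ℝ) (hε : 0 < ε) (hK : 2 ^ n * ε ≤ K)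
    (y : Player n → ℝ)
    (hyr : y Player.r = 1)
    (hyp : ∀ (l : Fin (n + 2)) (i : Fin 4), y (Player.p l i) = ((l.1 : ℝ) + 1) * K)
    (hyq : ∀ (l : Fin (n + 2)) (i : Fin 4), y (Player.q l i) = ((l.1 : ℝ) + 1) * K) :
    (∑ p, y p) = packV n K 1 Finset.univ ∧
    ∀ S : Finset (Player n), packV n K 1 S ≤ ∑ p ∈ S, y p := by
  have hK0 : 0 ≤ K := le_trans (by positivity) hK
  obtain rfl : y = levelAlloc n K := by
    funext p
    cases p <;> simp only [levelAlloc, hyr, hyp, hyq]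
  exact ⟨sum_levelAlloc_eq_packV hK0,
    packV_le_sum (levelAlloc_nonneg hK0) (wt_le_sum_levelAlloc hK0)⟩
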